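/- For every integer n ≥ 1 the function t ↦ U_n(t) is differentiable on ℝ and satisfies dU_n/dt = V_n⁻(t)·( f_0(t) − ⟨u⁺, f⁺⟩ ) + V_n⁺(t)·( f_{n+1}(t) − ⟨u⁻, f⁺⟩ ). -/

import Mathlib

/-!
Put `u⁺ = T⁻¹ f⁺`, so that `U = u⁺_{n-1}`. Differentiating `T u⁺ = f⁺` gives
`u⁺' = T⁻¹ (f⁺' - T' u⁺)`, where `f_k' = f_{k-1} + f_{k+1}` by differentiation under the integral
and `2 cos θ cos kθ = cos (k-1)θ + cos (k+1)θ`. So `T'` is again Toeplitz, and since `T u⁺ = f⁺`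
the vector `f⁺' - T' u⁺` vanishes except for its first entry `f_0 - ⟨u⁺, f⁺⟩` and its last entry
`f_{n+1} - ⟨u⁻, f⁺⟩`. The last entry of `T⁻¹` applied to it is the formula, because `T⁻¹` is
symmetric and persymmetric. `T` is positive definite, as its quadratic form is
`(1/2π) ∫ e^{2t cos θ} |∑ⱼ xⱼ e^{ijθ}|² dθ`.
-/

open MeasureTheory Matrix Filter

/-- The k-th Fourier coefficient of the symbol `f(e^{iθ}) = e^{2t cos θ}`. -/
noncomputable def fk (t : ℝ) (k : ℤ) : ℝ :=
  (1 / (2 * Real.pi)) *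
    ∫ θ in (0:ℝ)..(2 * Real.pi), Real.exp (2 * t * Real.cos θ) * Real.cos ((k : ℝ) * θ)

/-- The n×n Toeplitz matrix `T_n(t)` with (j,k) entry `f_{j-k}(t)`. -/
noncomputable def Tmat (n : ℕ) (t : ℝ) : Matrix (Fin n) (Fin n) ℝ :=
  fun j k => fk t ((j : ℤ) - (k : ℤ))

/-- The Toeplitz determinant `D_n(t)`. -/
noncomputable def Dn (n : ℕ) (t : ℝ) : ℝ := (Tmat n t).det

/-- δ⁺ = (1,0,…,0)ᵀ. -/
def deltaPlus (n : ℕ) : Fin n → ℝ := fun i => if (i : ℕ) = 0 then 1 else 0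

/-- δ⁻ = (0,…,0,1)ᵀ. -/
def deltaMinus (n : ℕ) : Fin n → ℝ := fun i => if (i : ℕ) = n - 1 then 1 else 0

/-- f⁺ = (f_1,…,f_n)ᵀ. -/
noncomputable def fplus (n : ℕ) (t : ℝ) : Fin n → ℝ := fun j => fk t ((j : ℤ) + 1)

/-- f⁻ = (f_n,…,f_1)ᵀ. -/
noncomputable def fminus (n : ℕ) (t : ℝ) : Fin n → ℝ := fun j => fk t ((n : ℤ) - (j : ℤ))

/-- U_n(t) = ⟨T_n(t)⁻¹ f⁺, δ⁻⟩. -/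
noncomputable def Un (n : ℕ) (t : ℝ) : ℝ :=
  dotProduct ((Tmat n t)⁻¹ *ᵥ fplus n t) (deltaMinus n)

/-- V_n⁺(t) = ⟨T_n(t)⁻¹ δ⁺, δ⁺⟩. -/
noncomputable def Vplus (n : ℕ) (t : ℝ) : ℝ :=
  dotProduct ((Tmat n t)⁻¹ *ᵥ deltaPlus n) (deltaPlus n)

/-- V_n⁻(t) = ⟨T_n(t)⁻¹ δ⁻, δ⁺⟩. -/
noncomputable def Vminus (n : ℕ) (t : ℝ) : ℝ :=
  dotProduct ((Tmat n t)⁻¹ *ᵥ deltaMinus n) (deltaPlus n)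

open Real

namespace Matrix

def toeplitz {R : Type*} (n : ℕ) (F : ℤ → R) : Matrix (Fin n) (Fin n) R :=
  of fun j k => F ((j : ℤ) - k)

variable {R : Type*} {n : ℕ} {F : ℤ → R}

theorem toeplitz_transpose (hF : ∀ k, F (-k) = F k) : (toeplitz n F)ᵀ = toeplitz n F := by
  ext j k
  simp [toeplitz, ← hF ((j : ℤ) - k)]

theorem toeplitz_submatrix_rev : (toeplitz n F).submatrix Fin.rev Fin.rev = (toeplitz n F)ᵀ := by
  ext j k
  simp only [toeplitz, submatrix_apply, transpose_apply, of_apply, Fin.val_rev]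
  congr 1
  omega

variable [CommRing R]

theorem inv_toeplitz_apply_rev (i j : Fin n) :
    (toeplitz n F)⁻¹ i.rev j.rev = (toeplitz n F)⁻¹ j i := by
  have h : ((toeplitz n F).submatrix Fin.rev Fin.rev)⁻¹ =
      (toeplitz n F)⁻¹.submatrix Fin.rev Fin.rev :=
    inv_submatrix_equiv (toeplitz n F) Fin.revPerm Fin.revPerm
  rw [toeplitz_submatrix_rev, ← transpose_nonsing_inv] at h
  exact (congr_fun₂ h i j).symm

/-- Entry `j` of the left side is `(F j - (T u)_{j-1}) + (F (j + 2) - (T u)_{j+1})` (rows of the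
Toeplitz matrix `T` of `F` extended to all `j ∈ ℤ`), and each bracket vanishes by `hu` unless that
row lies outside `T`. -/
theorem shift_sub_toeplitz_mulVec {m : ℕ} {u : Fin (m + 1) → R}
    (hu : toeplitz (m + 1) F *ᵥ u = fun i : Fin (m + 1) => F ((i : ℤ) + 1)) :
    (fun j : Fin (m + 1) => F j + F (j + 2 : ℤ)) -
        toeplitz (m + 1) (fun k => F (k - 1) + F (k + 1)) *ᵥ u =
      Pi.single 0 (F 0 - ∑ k : Fin (m + 1), F (-1 - k) * u k) +
        Pi.single (Fin.last m) (F (m + 2) - ∑ k : Fin (m + 1), F (m + 1 - k) * u k) := by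
  have hrow (i : Fin (m + 1)) : ∑ k : Fin (m + 1), F (i - k) * u k = F (i + 1 : ℤ) :=
    congrFun hu i
  ext j
  have hsplit : (toeplitz (m + 1) (fun k => F (k - 1) + F (k + 1)) *ᵥ u) j =
      ∑ k : Fin (m + 1), F (j - 1 - k) * u k + ∑ k : Fin (m + 1), F (j + 1 - k) * u k := by
    simp only [mulVec, dotProduct, toeplitz, of_apply, add_mul, Finset.sum_add_distrib]
    ring_nf
  have hfirst : F j - ∑ k : Fin (m + 1), F (j - 1 - k) * u k =
      (Pi.single 0 (F 0 - ∑ k : Fin (m + 1), F (-1 - k) * u k) : Fin (m + 1) → R) j := by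
    rcases Fin.eq_zero_or_eq_succ j with rfl | ⟨i, rfl⟩
    · simp
    · rw [Pi.single_eq_of_ne (Fin.succ_ne_zero i)]
      have h := hrow i.castSucc
      simp only [Fin.val_succ, Fin.val_castSucc, Nat.cast_add, Nat.cast_one,
        add_sub_cancel_right] at h ⊢
      rw [h, sub_self]
  have hlast : F (j + 2 : ℤ) - ∑ k : Fin (m + 1), F (j + 1 - k) * u k =
      (Pi.single (Fin.last m) (F (m + 2) - ∑ k : Fin (m + 1), F (m + 1 - k) * u k) :
        Fin (m + 1) → R) j := by
    rcases Fin.eq_castSucc_or_eq_last j with ⟨i, rfl⟩ | rfl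
    · rw [Pi.single_eq_of_ne (Fin.castSucc_ne_last i)]
      have h := hrow i.succ
      simp only [Fin.val_succ, Fin.val_castSucc, Nat.cast_add, Nat.cast_one] at h ⊢
      rw [h]
      ring_nf
    · simp
  rw [Pi.sub_apply, hsplit, Pi.add_apply, ← hfirst, ← hlast]
  ring

end Matrix

section MatrixCalculus

variable {ι : Type*} [Fintype ι] {A : ℝ → Matrix ι ι ℝ} {t : ℝ}

theorem HasDerivAt.mulVec {A' : Matrix ι ι ℝ} {v : ℝ → ι → ℝ} {v' : ι → ℝ}
    (hA : ∀ i j, HasDerivAt (fun s => A s i j) (A' i j) t) (hv : HasDerivAt v v' t) :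
    HasDerivAt (fun s => A s *ᵥ v s) (A' *ᵥ v t + A t *ᵥ v') t := by
  refine hasDerivAt_pi.2 fun i => ?_
  show HasDerivAt (fun s => ∑ j, A s i j * v s j) (∑ j, A' i j * v t j + ∑ j, A t i j * v' j) t
  rw [← Finset.sum_add_distrib]
  exact .fun_sum fun j _ => (hA i j).mul (hasDerivAt_pi.1 hv j)

variable [DecidableEq ι]

theorem differentiableAt_det (hA : ∀ i j, DifferentiableAt ℝ (fun s => A s i j) t) :
    DifferentiableAt ℝ (fun s => (A s).det) t := by
  simp_rw [det_apply]
  exact .fun_sum fun σ _ => (DifferentiableAt.fun_finsetProd fun i _ => hA (σ i) i).const_smul _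

theorem differentiableAt_inv_apply (hA : ∀ i j, DifferentiableAt ℝ (fun s => A s i j) t)
    (hdet : (A t).det ≠ 0) (i j : ι) : DifferentiableAt ℝ (fun s => (A s)⁻¹ i j) t := by
  have hadj : DifferentiableAt ℝ (fun s => (A s).adjugate i j) t := by
    simp_rw [adjugate_apply]
    refine differentiableAt_det fun a b => ?_
    by_cases hab : a = j
    · simp [hab]
    · simpa [hab] using hA a b
  simp_rw [inv_def, Ring.inverse_eq_inv', Matrix.smul_apply, smul_eq_mul]
  exact ((differentiableAt_det hA).inv hdet).mul hadj

/-- Differentiate `A u = b`: `A' u + A u' = b'`. -/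
theorem hasDerivAt_inv_mulVec {A' : Matrix ι ι ℝ} {b : ℝ → ι → ℝ} {b' : ι → ℝ}
    (hA : ∀ i j, HasDerivAt (fun s => A s i j) (A' i j) t) (hb : HasDerivAt b b' t)
    (hdet : (A t).det ≠ 0) :
    HasDerivAt (fun s => (A s)⁻¹ *ᵥ b s) ((A t)⁻¹ *ᵥ (b' - A' *ᵥ ((A t)⁻¹ *ᵥ b t))) t := by
  set u := fun s => (A s)⁻¹ *ᵥ b s
  have hdiff (i j : ι) : DifferentiableAt ℝ (fun s => A s i j) t := (hA i j).differentiableAt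
  have hu : HasDerivAt u (deriv u t) t := by
    refine DifferentiableAt.hasDerivAt (differentiableAt_pi.2 fun i => ?_)
    simp only [u, mulVec, dotProduct]
    exact .fun_sum fun j _ =>
      (differentiableAt_inv_apply hdiff hdet i j).mul (differentiableAt_pi.1 hb.differentiableAt j)
  have hAu : (fun s => A s *ᵥ u s) =ᶠ[nhds t] b := by
    filter_upwards [(differentiableAt_det hdiff).continuousAt.eventually_ne hdet] with s hs
    simp [u, mulVec_mulVec, mul_nonsing_inv _ (Ne.isUnit hs)]
  have hb' : A' *ᵥ u t + A t *ᵥ deriv u t = b' :=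
    ((HasDerivAt.mulVec hA hu).congr_of_eventuallyEq hAu.symm).unique hb
  convert hu using 1
  rw [← hb', add_sub_cancel_left, mulVec_mulVec, nonsing_inv_mul _ (Ne.isUnit hdet), one_mulVec]

end MatrixCalculus

theorem hasDerivAt_integral_exp_mul {g h : ℝ → ℝ} (hg : Continuous g) (hh : Continuous h)
    (a b t : ℝ) :
    HasDerivAt (fun s => ∫ θ in a..b, exp (s * g θ) * h θ)
      (∫ θ in a..b, g θ * exp (t * g θ) * h θ) t := by
  have hbound (s θ : ℝ) (hs : s ∈ Metric.ball t 1) :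
      ‖g θ * exp (s * g θ) * h θ‖ ≤ |g θ| * exp ((|t| + 1) * |g θ|) * |h θ| := by
    have hs' : |s| ≤ |t| + 1 := by
      have := abs_sub_abs_le_abs_sub s t
      rw [Metric.mem_ball, Real.dist_eq] at hs
      linarith
    rw [norm_mul, norm_mul, Real.norm_eq_abs, Real.norm_eq_abs, Real.norm_eq_abs, abs_exp]
    gcongr _ * exp ?_ * _
    calc s * g θ ≤ |s| * |g θ| := by rw [← abs_mul]; exact le_abs_self _
      _ ≤ (|t| + 1) * |g θ| := by gcongr
  refine (intervalIntegral.hasDerivAt_integral_of_dominated_loc_of_deriv_le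
    (Metric.ball_mem_nhds t one_pos) (.of_forall fun s => ?_) ?_ ?_
    (.of_forall fun θ _ s hs => hbound s θ hs) ?_
    (.of_forall fun θ _ s _ => ?_)).2
  · exact (by fun_prop : Continuous _).aestronglyMeasurable
  · exact (by fun_prop : Continuous _).intervalIntegrable _ _
  · exact (by fun_prop : Continuous _).aestronglyMeasurable
  · exact (by fun_prop : Continuous _).intervalIntegrable _ _
  · simpa [mul_comm] using ((hasDerivAt_mul_const (g θ)).exp).mul_const (h θ)

noncomputable def cosCoeff (w : ℝ → ℝ) (k : ℤ) : ℝ :=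
  1 / (2 * π) * ∫ θ in (0:ℝ)..(2 * π), w θ * cos (k * θ)

section CosCoeff

variable {w : ℝ → ℝ}

theorem cosCoeff_neg (k : ℤ) : cosCoeff w (-k) = cosCoeff w k := by
  simp [cosCoeff]

theorem integral_cos_int_mul {k : ℤ} (hk : k ≠ 0) : ∫ θ in (0:ℝ)..(2 * π), cos (k * θ) = 0 := by
  have hk' : (k : ℝ) ≠ 0 := by exact_mod_cast hk
  have h2k : (k : ℝ) * (2 * π) = (2 * k : ℤ) * π := by push_cast; ring
  rw [intervalIntegral.integral_comp_mul_left (fun x => cos x) hk', integral_cos, h2k,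
    sin_int_mul_pi]
  simp

theorem cosCoeff_one (k : ℤ) : cosCoeff (fun _ => 1) k = if k = 0 then 1 else 0 := by
  split_ifs with hk
  · simp only [cosCoeff, hk, Int.cast_zero, zero_mul, cos_zero, mul_one,
      intervalIntegral.integral_const, sub_zero, smul_eq_mul]
    field_simp
  · simp [cosCoeff, integral_cos_int_mul hk]

theorem cosCoeff_two_cos_mul (hw : Continuous w) (k : ℤ) :
    cosCoeff (fun θ => 2 * cos θ * w θ) k = cosCoeff w (k - 1) + cosCoeff w (k + 1) := by
  have hint (c : ℝ) : IntervalIntegrable (fun θ => w θ * cos (c * θ)) volume 0 (2 * π) :=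
    (hw.mul (by fun_prop)).intervalIntegrable _ _
  simp only [cosCoeff, ← mul_add]
  rw [← intervalIntegral.integral_add (hint _) (hint _)]
  congr 1
  refine intervalIntegral.integral_congr fun θ _ => ?_
  have h1 : ((k - 1 : ℤ) : ℝ) * θ = k * θ - θ := by push_cast; ring
  have h2 : ((k + 1 : ℤ) : ℝ) * θ = k * θ + θ := by push_cast; ring
  simp only [h1, h2, cos_sub, cos_add]
  ring

theorem sum_sum_mul_cos_sub {n : ℕ} (x : Fin n → ℝ) (θ : ℝ) :
    ∑ j, ∑ k, x j * x k * cos (((j : ℤ) - k : ℤ) * θ) =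
      (∑ j, x j * cos (j * θ)) ^ 2 + (∑ j, x j * sin (j * θ)) ^ 2 := by
  simp only [sq, Finset.sum_mul_sum, ← Finset.sum_add_distrib]
  refine Finset.sum_congr rfl fun j _ => Finset.sum_congr rfl fun k _ => ?_
  push_cast
  rw [sub_mul, cos_sub]
  ring

theorem dotProduct_toeplitz_cosCoeff_mulVec (hw : Continuous w) {n : ℕ} (x : Fin n → ℝ) :
    x ⬝ᵥ (toeplitz n (cosCoeff w) *ᵥ x) =
      1 / (2 * π) * ∫ θ in (0:ℝ)..(2 * π),
        w θ * ∑ j, ∑ k, x j * x k * cos (((j : ℤ) - k : ℤ) * θ) := by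
  simp only [Finset.mul_sum]
  rw [intervalIntegral.integral_finsetSum fun j _ =>
    (by fun_prop : Continuous _).intervalIntegrable _ _]
  simp only [dotProduct, mulVec, toeplitz, of_apply, cosCoeff, Finset.mul_sum]
  refine Finset.sum_congr rfl fun j _ => ?_
  rw [intervalIntegral.integral_finsetSum fun k _ =>
    (by fun_prop : Continuous _).intervalIntegrable _ _, Finset.mul_sum]
  refine Finset.sum_congr rfl fun k _ => ?_
  simp only [mul_left_comm (w _), intervalIntegral.integral_const_mul]
  ring

theorem toeplitz_cosCoeff_one {n : ℕ} : toeplitz n (cosCoeff fun _ => 1) = 1 := by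
  ext j k
  simp [toeplitz, cosCoeff_one, one_apply, sub_eq_zero, Fin.val_eq_val]

/-- The quadratic form of the Toeplitz matrix is `(1/2π) ∫ w |∑ⱼ xⱼ e^{ijθ}|²`, and for `w ≡ 1`
it is `|x|²`; so it is at least `(min w) |x|²`. -/
theorem posDef_toeplitz_cosCoeff (hw : Continuous w) (hpos : ∀ θ, 0 < w θ) {n : ℕ} :
    (toeplitz n (cosCoeff w)).PosDef := by
  obtain ⟨θ₀, -, hθ₀⟩ := isCompact_Icc.exists_isMinOn (Set.nonempty_Icc.2 two_pi_pos.le)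
    hw.continuousOn
  refine .of_dotProduct_mulVec_pos ?_ fun x hx => ?_
  · rw [IsHermitian, conjTranspose_eq_transpose_of_trivial, toeplitz_transpose cosCoeff_neg]
  have hxx := dotProduct_toeplitz_cosCoeff_mulVec (w := fun _ => 1) continuous_const x
  rw [toeplitz_cosCoeff_one, one_mulVec] at hxx
  have hQ (θ : ℝ) : 0 ≤ ∑ j, ∑ k, x j * x k * cos (((j : ℤ) - k : ℤ) * θ) := by
    rw [sum_sum_mul_cos_sub]
    positivity
  rw [star_trivial, dotProduct_toeplitz_cosCoeff_mulVec hw]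
  calc 0 < w θ₀ * (x ⬝ᵥ x) :=
        mul_pos (hpos θ₀) (by simpa using dotProduct_star_self_pos_iff.2 hx)
    _ = 1 / (2 * π) * ∫ θ in (0:ℝ)..(2 * π),
          w θ₀ * ∑ j, ∑ k, x j * x k * cos (((j : ℤ) - k : ℤ) * θ) := by
      simp only [hxx, one_mul, intervalIntegral.integral_const_mul]
      ring
    _ ≤ _ := by
      gcongr
      refine intervalIntegral.integral_mono_on two_pi_pos.le ?_ ?_ fun θ hθ => ?_
      · exact (by fun_prop : Continuous _).intervalIntegrable _ _
      · exact (by fun_prop : Continuous _).intervalIntegrable _ _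
      · exact mul_le_mul_of_nonneg_right (hθ₀ hθ) (hQ θ)

end CosCoeff

theorem fk_eq_cosCoeff (t : ℝ) : fk t = cosCoeff fun θ => exp (2 * t * cos θ) := rfl

theorem Tmat_eq_toeplitz (n : ℕ) (t : ℝ) : Tmat n t = toeplitz n (fk t) := rfl

theorem hasDerivAt_fk (t : ℝ) (k : ℤ) :
    HasDerivAt (fun s => fk s k) (fk t (k - 1) + fk t (k + 1)) t := by
  have h := (hasDerivAt_integral_exp_mul (g := fun θ => 2 * cos θ) (h := fun θ => cos (k * θ))
    (by fun_prop) (by fun_prop) 0 (2 * π) t).const_mul (1 / (2 * π))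
  rw [fk_eq_cosCoeff, ← cosCoeff_two_cos_mul (by fun_prop)]
  refine (h.congr_deriv ?_).congr_of_eventuallyEq (.of_forall fun s => ?_)
  · simp only [cosCoeff, mul_assoc, mul_left_comm t]
  · simp only [fk, mul_assoc, mul_left_comm s]

theorem fk_neg (t : ℝ) (k : ℤ) : fk t (-k) = fk t k := cosCoeff_neg k

theorem posDef_Tmat (n : ℕ) (t : ℝ) : (Tmat n t).PosDef :=
  posDef_toeplitz_cosCoeff (by fun_prop) fun _ => exp_pos _

theorem Tmat_inv_transpose (n : ℕ) (t : ℝ) : ((Tmat n t)⁻¹)ᵀ = (Tmat n t)⁻¹ := by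
  rw [transpose_nonsing_inv, Tmat_eq_toeplitz, toeplitz_transpose (fk_neg t)]

theorem Tmat_inv_mulVec_dotProduct (n : ℕ) (t : ℝ) (v w : Fin n → ℝ) :
    ((Tmat n t)⁻¹ *ᵥ v) ⬝ᵥ w = v ⬝ᵥ ((Tmat n t)⁻¹ *ᵥ w) := by
  rw [dotProduct_comm, dotProduct_mulVec, ← mulVec_transpose, Tmat_inv_transpose, dotProduct_comm]

theorem hasDerivAt_Tmat_apply (n : ℕ) (t : ℝ) (i j : Fin n) :
    HasDerivAt (fun s => Tmat n s i j) (toeplitz n (fun k => fk t (k - 1) + fk t (k + 1)) i j) t :=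
  hasDerivAt_fk t _

theorem hasDerivAt_fplus (n : ℕ) (t : ℝ) :
    HasDerivAt (fplus n) (fun j : Fin n => fk t j + fk t (j + 2 : ℤ)) t :=
  hasDerivAt_pi.2 fun j => (hasDerivAt_fk t (j + 1)).congr_deriv (by ring_nf)

theorem toeplitz_mulVec_inv_mulVec_fplus (n : ℕ) (t : ℝ) :
    toeplitz n (fk t) *ᵥ ((Tmat n t)⁻¹ *ᵥ fplus n t) = fun i : Fin n => fk t ((i : ℤ) + 1) := by
  rw [← Tmat_eq_toeplitz, mulVec_mulVec, mul_nonsing_inv _ (posDef_Tmat n t).det_pos.ne'.isUnit,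
    one_mulVec]
  rfl

theorem inv_mulVec_fplus_dotProduct_fplus (n : ℕ) (t : ℝ) :
    (Tmat n t)⁻¹ *ᵥ fplus n t ⬝ᵥ fplus n t =
      ∑ k : Fin n, fk t (-1 - k) * ((Tmat n t)⁻¹ *ᵥ fplus n t) k := by
  refine Finset.sum_congr rfl fun k _ => ?_
  rw [mul_comm, fplus, ← fk_neg]
  ring_nf

theorem inv_mulVec_fminus_dotProduct_fplus (n : ℕ) (t : ℝ) :
    (Tmat n t)⁻¹ *ᵥ fminus n t ⬝ᵥ fplus n t =
      ∑ k : Fin n, fk t (n - k) * ((Tmat n t)⁻¹ *ᵥ fplus n t) k := by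
  rw [Tmat_inv_mulVec_dotProduct]
  rfl

/-- `u⁺' = T⁻¹ (f⁺' - T' u⁺)`, and `f⁺' - T' u⁺` is supported on the first and last entries. -/
theorem hasDerivAt_inv_mulVec_fplus (m : ℕ) (t : ℝ) :
    HasDerivAt (fun s => (Tmat (m + 1) s)⁻¹ *ᵥ fplus (m + 1) s)
      ((Tmat (m + 1) t)⁻¹ *ᵥ
        (Pi.single 0 (fk t 0 - (Tmat (m + 1) t)⁻¹ *ᵥ fplus (m + 1) t ⬝ᵥ fplus (m + 1) t) +
          Pi.single (Fin.last m)
            (fk t ((m + 1 : ℕ) + 1) - (Tmat (m + 1) t)⁻¹ *ᵥ fminus (m + 1) t ⬝ᵥ fplus (m + 1) t)))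
      t := by
  have hu := hasDerivAt_inv_mulVec (hasDerivAt_Tmat_apply (m + 1) t) (hasDerivAt_fplus _ t)
    (posDef_Tmat _ t).det_pos.ne'
  rw [shift_sub_toeplitz_mulVec (toeplitz_mulVec_inv_mulVec_fplus _ t)] at hu
  rw [inv_mulVec_fplus_dotProduct_fplus, inv_mulVec_fminus_dotProduct_fplus]
  push_cast
  rwa [add_assoc, one_add_one_eq_two]

theorem deltaPlus_eq_single (m : ℕ) : deltaPlus (m + 1) = Pi.single 0 1 := by
  ext i
  simp only [deltaPlus, Pi.single_apply, Fin.ext_iff, Fin.val_zero]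

theorem deltaMinus_eq_single (m : ℕ) : deltaMinus (m + 1) = Pi.single (Fin.last m) 1 := by
  ext i
  simp only [deltaMinus, Pi.single_apply, Fin.ext_iff, Fin.val_last, add_tsub_cancel_right]

theorem Un_succ (m : ℕ) :
    Un (m + 1) = fun s => ((Tmat (m + 1) s)⁻¹ *ᵥ fplus (m + 1) s) (Fin.last m) := by
  ext s
  simp [Un, deltaMinus_eq_single, dotProduct_single]

theorem Vminus_succ (m : ℕ) (t : ℝ) : Vminus (m + 1) t = (Tmat (m + 1) t)⁻¹ (Fin.last m) 0 := by
  rw [← Tmat_inv_transpose, transpose_apply]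
  simp [Vminus, deltaPlus_eq_single, deltaMinus_eq_single, mulVec_single]

/-- Persymmetry of `T_n` makes the two corner entries of `T_n⁻¹` equal. -/
theorem Vplus_succ (m : ℕ) (t : ℝ) :
    Vplus (m + 1) t = (Tmat (m + 1) t)⁻¹ (Fin.last m) (Fin.last m) := by
  rw [Tmat_eq_toeplitz, ← inv_toeplitz_apply_rev, Fin.rev_last]
  simp [Vplus, Tmat_eq_toeplitz, deltaPlus_eq_single, mulVec_single]

/-- The differentiation formula
dU_n/dt = V_n⁻·(f_0 − ⟨u⁺, f⁺⟩) + V_n⁺·(f_{n+1} − ⟨u⁻, f⁺⟩). -/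
theorem Un_deriv_formula (n : ℕ) (hn : 1 ≤ n) (t : ℝ) :
    HasDerivAt (Un n)
      (Vminus n t * (fk t 0 - dotProduct ((Tmat n t)⁻¹ *ᵥ fplus n t) (fplus n t))
        + Vplus n t * (fk t ((n : ℤ) + 1) - dotProduct ((Tmat n t)⁻¹ *ᵥ fminus n t) (fplus n t)))
      t := by
  obtain ⟨m, rfl⟩ := Nat.exists_eq_add_of_le' hn
  rw [Un_succ]
  refine (hasDerivAt_pi.1 (hasDerivAt_inv_mulVec_fplus m t) (Fin.last m)).congr_deriv ?_
  rw [Vminus_succ, Vplus_succ]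
  simp only [mulVec_add, mulVec_single, Pi.add_apply, Pi.smul_apply, col_apply, op_smul_eq_mul]
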